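/- Let G = C_{2n+1} be the odd cycle on 2n+1 vertices with n ≥ 1 (a critically 3-chromatic graph). Then there exists a subset W ⊆ V_G such that the expansion G[W] is a critically 4-chromatic graph. -/

import Mathlib

open SimpleGraph MvPolynomial

/-- The chromatic number of a graph, as a natural number: the least `m` such
that `G` has a proper `m`-coloring. -/
noncomputable def chromNum {V : Type*} (G : SimpleGraph V) : ℕ :=
  sInf {m | G.Colorable m}

/-- `G` is critically `s`-chromatic: `χ(G) = s` and deleting any vertex drops
the chromatic number to `s - 1`. -/
def CriticallyChromatic {V : Type*} (G : SimpleGraph V) (s : ℕ) : Prop :=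
  chromNum G = s ∧ ∀ v : V, chromNum (G.induce {v}ᶜ) = s - 1

/-- The expansion `G[W]` of a graph `G` at a set of vertices `W`: each vertex
`w ∈ W` is replaced by two adjacent copies (`Sum.inl w` and `Sum.inr w`), each
adjacent to (both copies of) the neighbors of `w`. -/
def expansion {V : Type*} (G : SimpleGraph V) (W : Set V) : SimpleGraph (V ⊕ W) :=
  SimpleGraph.fromRel (fun a b =>
    match a, b with
    | Sum.inl u, Sum.inl v => G.Adj u v
    | Sum.inl u, Sum.inr w => G.Adj u (w : V) ∨ u = (w : V)
    | Sum.inr _, Sum.inl _ => False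
    | Sum.inr w, Sum.inr w' => G.Adj (w : V) (w' : V))

/-- The `s`-th expansion `G^s` of `G`: every vertex is replaced by a clique of
size `s` (its shadows), and shadows of adjacent vertices are adjacent. -/
def nExpansion {V : Type*} (G : SimpleGraph V) (s : ℕ) : SimpleGraph (V × Fin s) :=
  SimpleGraph.fromRel (fun a b => G.Adj a.1 b.1 ∨ a.1 = b.1)

/-- `W` is an independent set of `G`. -/
def IsIndepSet {V : Type*} (G : SimpleGraph V) (W : Set V) : Prop :=
  ∀ ⦃u v⦄, u ∈ W → v ∈ W → ¬ G.Adj u v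

/-- `W` is a maximal independent set of `G`. -/
def IsMaxIndepSet {V : Type*} (G : SimpleGraph V) (W : Set V) : Prop :=
  _root_.IsIndepSet G W ∧ ∀ W', _root_.IsIndepSet G W' → W ⊆ W' → W = W'

/-- `W` is a vertex cover of `G`. -/
def IsVertexCover {V : Type*} (G : SimpleGraph V) (W : Set V) : Prop :=
  ∀ ⦃u v⦄, G.Adj u v → u ∈ W ∨ v ∈ W

/-- `W` is a minimal vertex cover of `G`. -/
def IsMinVertexCover {V : Type*} (G : SimpleGraph V) (W : Set V) : Prop :=
  _root_.IsVertexCover G W ∧ ∀ W' ⊆ W, _root_.IsVertexCover G W' → W' = W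

/-- `G` has a `b`-fold coloring using (at most) `d` colors: each vertex gets a
set of `b` colors, adjacent vertices getting disjoint sets. -/
def FoldColorable {V : Type*} (G : SimpleGraph V) (b d : ℕ) : Prop :=
  ∃ f : V → Finset (Fin d), (∀ v, (f v).card = b) ∧
    ∀ ⦃u v⦄, G.Adj u v → Disjoint (f u) (f v)

/-- The `b`-fold chromatic number `χ_b(G)`. -/
noncomputable def foldChromNum {V : Type*} (G : SimpleGraph V) (b : ℕ) : ℕ :=
  sInf {d | FoldColorable G b d}

/-- The fractional chromatic number `χ_f(G) = inf_b χ_b(G)/b`. -/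
noncomputable def fracChromNum {V : Type*} (G : SimpleGraph V) : ℝ :=
  ⨅ b : ℕ+, (foldChromNum G b : ℝ) / (b : ℝ)

/-- The cover ideal `J(G) = ⋂_{{i,j} ∈ E(G)} (x_i, x_j)` of a graph `G` on
`{x_1, …, x_n}`, inside `k[x_1, …, x_n]`. -/
noncomputable def coverIdeal (k : Type*) [Field k] {n : ℕ} (G : SimpleGraph (Fin n)) :
    Ideal (MvPolynomial (Fin n) k) :=
  ⨅ (i : Fin n) (j : Fin n) (_ : G.Adj i j),
    Ideal.span {MvPolynomial.X i, MvPolynomial.X j}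

/-!
Take `W` to be the even vertices `0, 2, …, 2n-2` of `C_{2n+1}`. In a 3-coloring of `G[W]` the two
copies of an expanded vertex take two colors, so its two neighbours share the third; along the
cycle this gives `2n, 1, 3, …, 2n-1` one color, although `2n-1` and `2n` are adjacent.

On the other hand, list the `3n+1` vertices of `G[W]` as `0, 0', 1, 2, 2', 3, …, 2n-1, 2n`. Every
edge joins vertices at distance at most two in this list, except the edges from `2n` to `0` and
`0'`. Once any vertex is deleted, coloring the others by their rank in the remaining list mod 3 is
proper. As deleting a vertex lowers the chromatic number by at most one, `G[W]` is critically
4-chromatic.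
-/

theorem Fin.val_sub_eq_one_iff {m : ℕ} (hm : 2 ≤ m) {a b : Fin m} :
    (a - b).val = 1 ↔ a.val = b.val + 1 ∨ (a.val = 0 ∧ b.val + 1 = m) := by
  have := b.isLt
  rcases le_or_gt b a with h | h
  · rw [Fin.sub_val_of_le h, Fin.le_def] at *; omega
  · rw [Fin.coe_sub_iff_lt.mpr h, Fin.lt_def] at *; omega

theorem SimpleGraph.cycleGraph_adj_iff_val {m : ℕ} (hm : 2 ≤ m) {u v : Fin m} :
    (cycleGraph m).Adj u v ↔ u.val + 1 = v.val ∨ v.val + 1 = u.val ∨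
      (u.val = 0 ∧ v.val + 1 = m) ∨ (v.val = 0 ∧ u.val + 1 = m) := by
  rw [cycleGraph_adj', Fin.val_sub_eq_one_iff hm, Fin.val_sub_eq_one_iff hm]
  omega

namespace SimpleGraph

variable {V : Type*} {H : SimpleGraph V}

theorem colorable_induce_of_forall_adj_ne {s : Set V} {k : ℕ} (f : V → ℕ) (hf : ∀ v, f v < k)
    (hadj : ∀ a ∈ s, ∀ b ∈ s, H.Adj a b → f a ≠ f b) : (H.induce s).Colorable k :=
  (colorable_iff_exists_bdd_nat_coloring k).mpr
    ⟨⟨fun v => f v, fun {a b} h => hadj a a.2 b b.2 h⟩, fun v => hf v⟩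

theorem Colorable.of_induce_compl_singleton {k : ℕ} {x : V}
    (h : (H.induce {x}ᶜ).Colorable k) : H.Colorable (k + 1) := by
  classical
  obtain ⟨C, hC⟩ := (colorable_iff_exists_bdd_nat_coloring k).mp h
  refine (colorable_iff_exists_bdd_nat_coloring (k + 1)).mpr
    ⟨⟨fun v => if hv : v = x then k else C ⟨v, hv⟩, fun {a b} hab => ?_⟩, fun v => ?_⟩
  · by_cases ha : a = x <;> by_cases hb : b = x
    · exact (hab.ne (ha.trans hb.symm)).elim
    all_goals simp only [ha, hb, dite_true, dite_false]
    · exact (hC _).ne'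
    · exact (hC _).ne
    · exact C.valid hab
  · change (if hv : v = x then k else C ⟨v, hv⟩) < k + 1
    split_ifs
    · omega
    · exact (hC _).trans (Nat.lt_succ_self k)

end SimpleGraph

theorem chromNum_eq_of_colorable {V : Type*} {H : SimpleGraph V} {k : ℕ} (h : H.Colorable k)
    (hlt : ∀ m < k, ¬ H.Colorable m) : chromNum H = k :=
  le_antisymm (Nat.sInf_le h)
    (not_lt.mp fun hk => hlt _ hk (Nat.sInf_mem (s := {m | H.Colorable m}) ⟨k, h⟩))

theorem criticallyChromatic_succ_of_forall_colorable_induce_compl {V : Type*}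
    {H : SimpleGraph V} {k : ℕ} (hH : ¬ H.Colorable k)
    (hx : ∀ x, (H.induce {x}ᶜ).Colorable k) : CriticallyChromatic H (k + 1) := by
  have : Nonempty V := not_isEmpty_iff.mp fun _ => hH (.of_isEmpty k)
  refine ⟨chromNum_eq_of_colorable (hx (Classical.arbitrary V)).of_induce_compl_singleton
    fun m hm hc => hH (hc.mono (by omega)), fun x => ?_⟩
  exact chromNum_eq_of_colorable (hx x) fun m hm hc =>
    hH (hc.of_induce_compl_singleton.mono (by omega))

section expansion

variable {V : Type*} {G : SimpleGraph V} {W : Set V}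

@[simp]
theorem expansion_adj_inl_inl {u v : V} :
    (expansion G W).Adj (.inl u) (.inl v) ↔ G.Adj u v := by
  simp only [expansion, fromRel_adj, ne_eq, Sum.inl.injEq, G.adj_comm v u, or_self,
    and_iff_right_iff_imp]
  exact Adj.ne

@[simp]
theorem expansion_adj_inl_inr {u : V} {w : W} :
    (expansion G W).Adj (.inl u) (.inr w) ↔ G.Adj u w ∨ u = w := by
  simp [expansion]

@[simp]
theorem expansion_adj_inr_inl {u : V} {w : W} :
    (expansion G W).Adj (.inr w) (.inl u) ↔ G.Adj u w ∨ u = w := by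
  rw [adj_comm, expansion_adj_inl_inr]

@[simp]
theorem expansion_adj_inr_inr {w w' : W} :
    (expansion G W).Adj (.inr w) (.inr w') ↔ G.Adj w w' := by
  simp only [expansion, fromRel_adj, ne_eq, Sum.inr.injEq, G.adj_comm (w' : V), or_self,
    and_iff_right_iff_imp]
  exact fun h hw => h.ne (congrArg Subtype.val hw)

theorem SimpleGraph.Coloring.expansion_inl_eq (C : (expansion G W).Coloring (Fin 3)) (w : W)
    {u v : V} (hu : G.Adj u w) (hv : G.Adj v w) : C (.inl u) = C (.inl v) := by
  have pigeonhole : ∀ p q x y : Fin 3, p ≠ q → x ≠ p → x ≠ q → y ≠ p → y ≠ q → x = y := by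
    decide
  exact pigeonhole (C (.inl w)) (C (.inr w)) _ _ (C.valid (by simp))
    (C.valid (by simpa using hu)) (C.valid (by simp [hu])) (C.valid (by simpa using hv))
    (C.valid (by simp [hv]))

end expansion

namespace OddCycleExpansion

def expanded (n : ℕ) : Set (Fin (2 * n + 1)) := {u | u.val % 2 = 0 ∧ u.val < 2 * n}

abbrev graph (n : ℕ) : SimpleGraph (Fin (2 * n + 1) ⊕ expanded n) :=
  expansion (cycleGraph (2 * n + 1)) (expanded n)

variable {n : ℕ}

theorem not_colorable_three (hn : 1 ≤ n) : ¬ (graph n).Colorable 3 := by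
  rintro ⟨C⟩
  have adj {u v : Fin (2 * n + 1)} (h : u.val + 1 = v.val ∨ (u.val = 0 ∧ v.val = 2 * n)) :
      (cycleGraph (2 * n + 1)).Adj u v :=
    (cycleGraph_adj_iff_val (by omega)).mpr (by omega)
  have chain (i : ℕ) (hi : i < n) :
      C (.inl ⟨2 * i + 1, by omega⟩) = C (.inl ⟨2 * n, by omega⟩) := by
    induction i with
    | zero =>
      exact C.expansion_inl_eq ⟨0, by simp [expanded]; omega⟩ (adj (by simp)).symm
        (adj (by simp)).symm
    | succ i ih =>
      rw [← ih (by omega)]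
      exact C.expansion_inl_eq ⟨⟨2 * i + 2, by omega⟩, by simp [expanded]; omega⟩
        (adj (by simp; omega)).symm (adj (by simp))
  have last : (cycleGraph (2 * n + 1)).Adj ⟨2 * (n - 1) + 1, by omega⟩ ⟨2 * n, by omega⟩ :=
    adj (by simp; omega)
  exact C.valid (expansion_adj_inl_inl.mpr last) (chain (n - 1) (by omega))

-- the rank of a vertex in the list `0, 0', 1, 2, 2', 3, …, 2n-1, 2n`
def position (n : ℕ) : Fin (2 * n + 1) ⊕ expanded n → ℕ
  | .inl u => (3 * u.val + 1) / 2
  | .inr w => 3 * w.val.val / 2 + 1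

theorem position_le (a : Fin (2 * n + 1) ⊕ expanded n) : position n a ≤ 3 * n := by
  rcases a with u | ⟨w, hw, hw'⟩ <;> simp only [position] <;> omega

theorem position_injective : Function.Injective (position n) := by
  rintro (u | ⟨w, hw, hw'⟩) (v | ⟨w', hw₂, hw₂'⟩) h <;> simp only [position] at h
  · exact congrArg Sum.inl (Fin.ext (by omega))
  · omega
  · omega
  · obtain rfl : w = w' := Fin.ext (by omega)
    rfl

def BandAdj (N i j : ℕ) : Prop :=
  (i ≠ j ∧ i ≤ j + 2 ∧ j ≤ i + 2) ∨ (i = N ∧ j ≤ 1) ∨ (j = N ∧ i ≤ 1)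

theorem bandAdj_position (hn : 1 ≤ n) {a b : Fin (2 * n + 1) ⊕ expanded n}
    (h : (graph n).Adj a b) : BandAdj (3 * n) (position n a) (position n b) := by
  rcases a with u | ⟨w, hw, hw'⟩ <;> rcases b with v | ⟨w', hw₂, hw₂'⟩ <;>
    simp only [expansion_adj_inl_inl, expansion_adj_inl_inr, expansion_adj_inr_inl,
      expansion_adj_inr_inr, cycleGraph_adj_iff_val (show 2 ≤ 2 * n + 1 by omega),
      Fin.ext_iff] at h <;> simp only [BandAdj, position] <;> omega

def gapColor (j i : ℕ) : ℕ := (if i < j then i else i - 1) % 3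

theorem gapColor_ne {N i i' j : ℕ} (hN : N % 3 = 0) (hj : j ≤ N) (h : BandAdj N i i')
    (hi : i ≠ j) (hi' : i' ≠ j) : gapColor j i ≠ gapColor j i' := by
  unfold BandAdj at h; unfold gapColor; split_ifs <;> omega

theorem colorable_induce_compl (hn : 1 ≤ n) (x : Fin (2 * n + 1) ⊕ expanded n) :
    ((graph n).induce {x}ᶜ).Colorable 3 :=
  colorable_induce_of_forall_adj_ne (fun a => gapColor (position n x) (position n a))
    (fun _ => Nat.mod_lt _ (by norm_num)) fun _ ha _ hb hab =>
      gapColor_ne (by omega) (position_le x) (bandAdj_position hn hab)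
        (position_injective.ne ha) (position_injective.ne hb)

end OddCycleExpansion

/-- For the odd cycle `C_{2n+1}` (`n ≥ 1`), which is
critically 3-chromatic, there exists `W` such that the expansion
`C_{2n+1}[W]` is critically 4-chromatic. -/
theorem oddCycle_expansion_critical (n : ℕ) (hn : 1 ≤ n) :
    ∃ W : Set (Fin (2 * n + 1)),
      CriticallyChromatic (expansion (SimpleGraph.cycleGraph (2 * n + 1)) W) 4 :=
  ⟨OddCycleExpansion.expanded n, criticallyChromatic_succ_of_forall_colorable_induce_compl
    (OddCycleExpansion.not_colorable_three hn) (OddCycleExpansion.colorable_induce_compl hn)⟩
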